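/- arXiv:2410.04911 — 2 statements merged into one kernel-verified Lean document; each statement's English description precedes it below -/
import Mathlib

section
/- Let n ≥ 1, let τ > 0, and let A, B : ℝ → Matrix (Fin n) (Fin n) ℂ be continuous. Suppose U, V, u : ℝ → Matrix (Fin n) (Fin n) ℂ are differentiable and satisfy, for all t ∈ [0, τ]: U'(t) = −A(t)·U(t) with U(τ) = 1; V'(t) = −B(t)·V(t) with V(τ) = 1; and u'(t) + A(t)·u(t) − u(t)·B(t) = −(A(t) − B(t)) with u(τ) = 0. Then u(t) = U(t)·V(t)⁻¹ − 1 for all t ∈ [0, τ]; in particular u(0) = U(0)·V(0)⁻¹ − 1 (the pseudolinearization identity I_{E(A,B)}(A − B) = C_A C_B⁻¹ − Id). -/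
/-!
The defect `w := (u + 1) V - U` solves the homogeneous equation `w' = -A w` with `w(τ) = 0`, so
`w ≡ 0` by uniqueness for linear ODEs, i.e. `(u + 1) V = U` on `[0, τ]`. Uniqueness also shows
that `V t` is invertible: if `V t * M = 0`, then `s ↦ V s * M` solves `y' = -B y` and vanishes
at `t`, hence at `τ`, where it equals `M`.
-/

attribute [local instance] Matrix.frobeniusNormedRing Matrix.frobeniusNormedAlgebra

open Set

theorem eqOn_zero_of_hasDerivAt_clm_apply {E : Type*} [NormedAddCommGroup E] [NormedSpace ℝ E]
    {L : ℝ → E →L[ℝ] E} {f : ℝ → E} {a b t₀ : ℝ} (hL : ContinuousOn L (Icc a b))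
    (hf : ∀ t ∈ Icc a b, HasDerivAt f (L t (f t)) t) (ht₀ : t₀ ∈ Icc a b) (hf₀ : f t₀ = 0) :
    EqOn f 0 (Icc a b) := by
  obtain ⟨K, hK⟩ := isCompact_Icc.exists_bound_of_continuousOn hL
  have hlip : ∀ t ∈ Icc a b, LipschitzOnWith K.toNNReal (L t) univ := fun t ht =>
    ((L t).lipschitz.weaken <| by simpa using Real.toNNReal_le_toNNReal (hK t ht)).lipschitzOnWith
  have hfc : ContinuousOn f (Icc a b) := HasDerivAt.continuousOn hf
  have hzero : ∀ t, HasDerivAt (0 : ℝ → E) (L t ((0 : ℝ → E) t)) t := fun t => by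
    simp only [Pi.zero_apply, map_zero]
    exact hasDerivAt_const t (0 : E)
  rw [← Icc_union_Icc_eq_Icc ht₀.1 ht₀.2]
  refine EqOn.union ?_ ?_
  · exact ODE_solution_unique_of_mem_Icc_left (s := fun _ => univ)
      (fun t ht => hlip t ⟨ht.1.le, ht.2.trans ht₀.2⟩) (hfc.mono (Icc_subset_Icc_right ht₀.2))
      (fun t ht => (hf t ⟨ht.1.le, ht.2.trans ht₀.2⟩).hasDerivWithinAt) (fun _ _ => mem_univ _)
      continuousOn_const (fun t _ => (hzero t).hasDerivWithinAt) (fun _ _ => mem_univ _) hf₀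
  · exact ODE_solution_unique_of_mem_Icc_right (s := fun _ => univ)
      (fun t ht => hlip t ⟨ht₀.1.trans ht.1, ht.2.le⟩) (hfc.mono (Icc_subset_Icc_left ht₀.1))
      (fun t ht => (hf t ⟨ht₀.1.trans ht.1, ht.2.le⟩).hasDerivWithinAt) (fun _ _ => mem_univ _)
      continuousOn_const (fun t _ => (hzero t).hasDerivWithinAt) (fun _ _ => mem_univ _) hf₀

section NormedRing

variable {R : Type*} [NormedRing R] [NormedAlgebra ℝ R] {C : ℝ → R} {a b : ℝ}

theorem eqOn_zero_of_hasDerivAt_mul_left {f : ℝ → R} {t₀ : ℝ} (hC : ContinuousOn C (Icc a b))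
    (hf : ∀ t ∈ Icc a b, HasDerivAt f (C t * f t) t) (ht₀ : t₀ ∈ Icc a b) (hf₀ : f t₀ = 0) :
    EqOn f 0 (Icc a b) :=
  eqOn_zero_of_hasDerivAt_clm_apply (L := fun t => ContinuousLinearMap.mul ℝ R (C t))
    ((ContinuousLinearMap.mul ℝ R).continuous.comp_continuousOn hC) hf ht₀ hf₀

theorem isLeftRegular_of_hasDerivAt_mul_left {V : ℝ → R} (hC : ContinuousOn C (Icc a b))
    (hV : ∀ t ∈ Icc a b, HasDerivAt V (C t * V t) t) (hVb : V b = 1) :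
    ∀ t ∈ Icc a b, IsLeftRegular (V t) := by
  intro t ht
  rw [isLeftRegular_iff_right_eq_zero_of_mul]
  intro M hM
  have hsub : Icc t b ⊆ Icc a b := Icc_subset_Icc_left ht.1
  have hVM : ∀ s ∈ Icc t b, HasDerivAt (fun s => V s * M) (C s * (V s * M)) s := fun s hs => by
    simpa only [mul_assoc] using (hV s (hsub hs)).mul_const M
  have hzero := eqOn_zero_of_hasDerivAt_mul_left (hC.mono hsub) hVM (left_mem_Icc.2 ht.2) hM
  simpa [hVb] using hzero (right_mem_Icc.2 ht.2)

end NormedRing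

theorem pseudolinearization_identity_general
    (n : ℕ) (τ : ℝ) (hτ : 0 < τ)
    (A B : ℝ → Matrix (Fin n) (Fin n) ℂ) (hA : Continuous A) (hB : Continuous B)
    (U V u : ℝ → Matrix (Fin n) (Fin n) ℂ)
    (hUdiff : Differentiable ℝ U) (hVdiff : Differentiable ℝ V)
    (hudiff : Differentiable ℝ u)
    (hUode : ∀ t ∈ Set.Icc (0 : ℝ) τ, deriv U t = -(A t * U t)) (hUterm : U τ = 1)
    (hVode : ∀ t ∈ Set.Icc (0 : ℝ) τ, deriv V t = -(B t * V t)) (hVterm : V τ = 1)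
    (huode : ∀ t ∈ Set.Icc (0 : ℝ) τ,
      deriv u t + A t * u t - u t * B t = -(A t - B t)) (huterm : u τ = 0) :
    (∀ t ∈ Set.Icc (0 : ℝ) τ, u t = U t * (V t)⁻¹ - 1) ∧
      u 0 = U 0 * (V 0)⁻¹ - 1 := by
  have hU : ∀ t ∈ Icc 0 τ, HasDerivAt U (-A t * U t) t := fun t ht =>
    (hUdiff t).hasDerivAt.congr_deriv ((hUode t ht).trans (neg_mul _ _).symm)
  have hV : ∀ t ∈ Icc 0 τ, HasDerivAt V (-B t * V t) t := fun t ht =>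
    (hVdiff t).hasDerivAt.congr_deriv ((hVode t ht).trans (neg_mul _ _).symm)
  have hu : ∀ t ∈ Icc 0 τ, HasDerivAt u (-(A t - B t) + u t * B t - A t * u t) t := fun t ht =>
    (hudiff t).hasDerivAt.congr_deriv (eq_sub_of_add_eq (eq_add_of_sub_eq (huode t ht)))
  have hw : ∀ t ∈ Icc 0 τ,
      HasDerivAt (fun s => (u s + 1) * V s - U s) (-A t * ((u t + 1) * V t - U t)) t := by
    intro t ht
    refine (((hu t ht).add_const 1).mul (hV t ht)).sub (hU t ht) |>.congr_deriv ?_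
    noncomm_ring
  have hw0 := eqOn_zero_of_hasDerivAt_mul_left hA.neg.continuousOn hw (right_mem_Icc.2 hτ.le)
    (by simp [huterm, hVterm, hUterm])
  have key : ∀ t ∈ Icc 0 τ, u t = U t * (V t)⁻¹ - 1 := by
    intro t ht
    have hVunit : IsUnit (V t) := IsArtinianRing.isUnit_iff_isLeftRegular.2
      (isLeftRegular_of_hasDerivAt_mul_left hB.neg.continuousOn hV hVterm t ht)
    rw [← sub_eq_zero.1 (hw0 ht), Matrix.mul_nonsing_inv_cancel_right _ _
      ((Matrix.isUnit_iff_isUnit_det _).1 hVunit), add_sub_cancel_right]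
  exact ⟨key, key 0 (left_mem_Icc.2 hτ.le)⟩

/-- pseudolinearization identity: if `U' = −A·U`, `U(τ) = 1`,
`V' = −B·V`, `V(τ) = 1`, and `u' + A·u − u·B = −(A − B)` with `u(τ) = 0` on `[0, τ]`,
then `u(t) = U(t)·V(t)⁻¹ − 1` on `[0, τ]`; in particular `u(0) = U(0)·V(0)⁻¹ − 1`. -/
theorem pseudolinearization_identity
    (n : ℕ) (hn : 1 ≤ n) (τ : ℝ) (hτ : 0 < τ)
    (A B : ℝ → Matrix (Fin n) (Fin n) ℂ) (hA : Continuous A) (hB : Continuous B)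
    (U V u : ℝ → Matrix (Fin n) (Fin n) ℂ)
    (hUdiff : Differentiable ℝ U) (hVdiff : Differentiable ℝ V)
    (hudiff : Differentiable ℝ u)
    (hUode : ∀ t ∈ Set.Icc (0 : ℝ) τ, deriv U t = -(A t * U t)) (hUterm : U τ = 1)
    (hVode : ∀ t ∈ Set.Icc (0 : ℝ) τ, deriv V t = -(B t * V t)) (hVterm : V τ = 1)
    (huode : ∀ t ∈ Set.Icc (0 : ℝ) τ,
      deriv u t + A t * u t - u t * B t = -(A t - B t)) (huterm : u τ = 0) :
    (∀ t ∈ Set.Icc (0 : ℝ) τ, u t = U t * (V t)⁻¹ - 1) ∧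
      u 0 = U 0 * (V 0)⁻¹ - 1 :=
  pseudolinearization_identity_general n τ hτ A B hA hB U V u hUdiff hVdiff hudiff hUode hUterm
    hVode hVterm huode huterm
end

section
/- Let n ≥ 1, let τ > 0, and let A, B : ℝ → Matrix (Fin n) (Fin n) ℂ be continuous. Suppose U, V, u : ℝ → Matrix (Fin n) (Fin n) ℂ are differentiable and satisfy, for all t ∈ [0, τ]: U'(t) = −A(t)·U(t) with U(τ) = 1; V'(t) = −B(t)·V(t) with V(τ) = 1; and u'(t) + A(t)·u(t) − u(t)·B(t) = −(A(t) − B(t)) with u(τ) = 0. If the scattering data agree, i.e. U(0) = V(0), then u(0) = 0. (Equality of nonabelian ray transforms C_A = C_B forces the attenuated ray transform with attenuation E(A,B) of A − B to vanish.) -/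
attribute [local instance] Matrix.frobeniusNormedRing Matrix.frobeniusNormedAlgebra

/-!
Both `t ↦ u t * V t + V t` and `U` solve `y' = -A y` with value `1` at `τ`, so they agree on
`[0, τ]`; at `0` this reads `u 0 * V 0 = U 0 - V 0 = 0`. It remains to cancel `V 0`: if
`V 0 * N₁ = V 0 * N₂`, then `V N₁` and `V N₂` solve `y' = -B y` with the same value at `0`,
hence `N₁ = V τ * N₁ = V τ * N₂ = N₂`; a left regular square matrix is also right regular.
-/

open Set NNReal

section LinearODE

variable {R : Type*} [NormedRing R] {M : ℝ → R}

lemma IsCompact.exists_lipschitzWith_mul_left {s : Set ℝ} (hs : IsCompact s)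
    (hM : ContinuousOn M s) : ∃ K : ℝ≥0, ∀ t ∈ s, LipschitzWith K (M t * ·) := by
  obtain ⟨C, hC⟩ := hs.exists_bound_of_continuousOn hM
  refine ⟨C.toNNReal, fun t ht => LipschitzWith.of_dist_le_mul fun x y => ?_⟩
  calc dist (M t * x) (M t * y) = ‖M t * (x - y)‖ := by rw [dist_eq_norm, mul_sub]
    _ ≤ ‖M t‖ * ‖x - y‖ := norm_mul_le _ _
    _ ≤ C.toNNReal * dist x y := by
      rw [dist_eq_norm]
      gcongr
      exact (hC t ht).trans (Real.le_coe_toNNReal C)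

theorem eqOn_Icc_of_hasDerivAt_mul_left [NormedSpace ℝ R] {f g : ℝ → R} {a b t₀ : ℝ}
    (hM : ContinuousOn M (Icc a b))
    (hf : ∀ t ∈ Icc a b, HasDerivAt f (M t * f t) t)
    (hg : ∀ t ∈ Icc a b, HasDerivAt g (M t * g t) t)
    (ht₀ : t₀ ∈ Icc a b) (heq : f t₀ = g t₀) :
    EqOn f g (Icc a b) := by
  obtain ⟨K, hK⟩ := isCompact_Icc.exists_lipschitzWith_mul_left hM
  have hfc : ContinuousOn f (Icc a b) := fun t ht => (hf t ht).continuousAt.continuousWithinAt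
  have hgc : ContinuousOn g (Icc a b) := fun t ht => (hg t ht).continuousAt.continuousWithinAt
  rw [← Icc_union_Icc_eq_Icc ht₀.1 ht₀.2]
  apply EqOn.union
  · have hss : Icc a t₀ ⊆ Icc a b := Icc_subset_Icc_right ht₀.2
    exact ODE_solution_unique_of_mem_Icc_left (v := fun t y => M t * y) (s := fun _ => univ)
      (fun t ht => (hK t (hss (Ioc_subset_Icc_self ht))).lipschitzOnWith)
      (hfc.mono hss) (fun t ht => (hf t (hss (Ioc_subset_Icc_self ht))).hasDerivWithinAt)
      (fun _ _ => mem_univ _)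
      (hgc.mono hss) (fun t ht => (hg t (hss (Ioc_subset_Icc_self ht))).hasDerivWithinAt)
      (fun _ _ => mem_univ _) heq
  · have hss : Icc t₀ b ⊆ Icc a b := Icc_subset_Icc_left ht₀.1
    exact ODE_solution_unique_of_mem_Icc_right (v := fun t y => M t * y) (s := fun _ => univ)
      (fun t ht => (hK t (hss (Ico_subset_Icc_self ht))).lipschitzOnWith)
      (hfc.mono hss) (fun t ht => (hf t (hss (Ico_subset_Icc_self ht))).hasDerivWithinAt)
      (fun _ _ => mem_univ _)
      (hgc.mono hss) (fun t ht => (hg t (hss (Ico_subset_Icc_self ht))).hasDerivWithinAt)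
      (fun _ _ => mem_univ _) heq

theorem isLeftRegular_of_hasDerivAt_mul_left_s6 [NormedAlgebra ℝ R] {V : ℝ → R} {a b s t : ℝ}
    (hM : ContinuousOn M (Icc a b)) (hV : ∀ t ∈ Icc a b, HasDerivAt V (M t * V t) t)
    (hs : s ∈ Icc a b) (hVs : IsLeftRegular (V s)) (ht : t ∈ Icc a b) :
    IsLeftRegular (V t) := fun N₁ N₂ h => by
  have hVN (N : R) : ∀ t ∈ Icc a b, HasDerivAt (V · * N) (M t * (V t * N)) t := fun t ht => by
    rw [← mul_assoc]
    exact (hV t ht).mul_const N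
  exact hVs (eqOn_Icc_of_hasDerivAt_mul_left hM (hVN N₁) (hVN N₂) ht h hs)

end LinearODE

theorem equal_scattering_data_kills_attenuated_transform_general
    (n : ℕ) (τ : ℝ) (hτ : 0 < τ)
    (A B : ℝ → Matrix (Fin n) (Fin n) ℂ) (hA : Continuous A) (hB : Continuous B)
    (U V u : ℝ → Matrix (Fin n) (Fin n) ℂ)
    (hUdiff : Differentiable ℝ U) (hVdiff : Differentiable ℝ V)
    (hudiff : Differentiable ℝ u)
    (hUode : ∀ t ∈ Set.Icc (0 : ℝ) τ, deriv U t = -(A t * U t)) (hUterm : U τ = 1)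
    (hVode : ∀ t ∈ Set.Icc (0 : ℝ) τ, deriv V t = -(B t * V t)) (hVterm : V τ = 1)
    (huode : ∀ t ∈ Set.Icc (0 : ℝ) τ,
      deriv u t + A t * u t - u t * B t = -(A t - B t)) (huterm : u τ = 0)
    (hscat : U 0 = V 0) :
    u 0 = 0 := by
  have h0 : (0 : ℝ) ∈ Icc 0 τ := ⟨le_rfl, hτ.le⟩
  have hτ' : τ ∈ Icc 0 τ := ⟨hτ.le, le_rfl⟩
  have hU : ∀ t ∈ Icc 0 τ, HasDerivAt U ((-A) t * U t) t := fun t ht => by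
    rw [Pi.neg_apply, neg_mul, ← hUode t ht]
    exact (hUdiff t).hasDerivAt
  have hV : ∀ t ∈ Icc 0 τ, HasDerivAt V ((-B) t * V t) t := fun t ht => by
    rw [Pi.neg_apply, neg_mul, ← hVode t ht]
    exact (hVdiff t).hasDerivAt
  have hV0 : IsLeftRegular (V 0) :=
    isLeftRegular_of_hasDerivAt_mul_left_s6 hB.neg.continuousOn hV hτ'
      (hVterm ▸ isRegular_one.left) h0
  have huV : EqOn (fun t => u t * V t + V t) U (Icc 0 τ) := by
    refine eqOn_Icc_of_hasDerivAt_mul_left hA.neg.continuousOn (fun t ht => ?_) hU hτ'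
      (by simp [huterm, hVterm, hUterm])
    have hu' : deriv u t = u t * B t - A t * u t - (A t - B t) := by
      linear_combination (norm := abel) huode t ht
    have hu : HasDerivAt u (u t * B t - A t * u t - (A t - B t)) t := by
      rw [← hu']
      exact (hudiff t).hasDerivAt
    refine ((hu.mul (hV t ht)).add (hV t ht)).congr_deriv ?_
    simp only [Pi.neg_apply]
    noncomm_ring
  have huV0 : u 0 * V 0 = 0 * V 0 := by
    simpa [hscat] using huV h0
  exact Matrix.isLeftRegular_iff_isRightRegular.mp hV0 huV0

/-- with `U`, `V`, `u` as in the pseudolinearization setup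
(`U' = −A·U`, `U(τ) = 1`; `V' = −B·V`, `V(τ) = 1`;
`u' + A·u − u·B = −(A − B)`, `u(τ) = 0` on `[0, τ]`), equality of the scattering
data `U(0) = V(0)` forces `u(0) = 0`. -/
theorem equal_scattering_data_kills_attenuated_transform
    (n : ℕ) (hn : 1 ≤ n) (τ : ℝ) (hτ : 0 < τ)
    (A B : ℝ → Matrix (Fin n) (Fin n) ℂ) (hA : Continuous A) (hB : Continuous B)
    (U V u : ℝ → Matrix (Fin n) (Fin n) ℂ)
    (hUdiff : Differentiable ℝ U) (hVdiff : Differentiable ℝ V)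
    (hudiff : Differentiable ℝ u)
    (hUode : ∀ t ∈ Set.Icc (0 : ℝ) τ, deriv U t = -(A t * U t)) (hUterm : U τ = 1)
    (hVode : ∀ t ∈ Set.Icc (0 : ℝ) τ, deriv V t = -(B t * V t)) (hVterm : V τ = 1)
    (huode : ∀ t ∈ Set.Icc (0 : ℝ) τ,
      deriv u t + A t * u t - u t * B t = -(A t - B t)) (huterm : u τ = 0)
    (hscat : U 0 = V 0) :
    u 0 = 0 :=
  equal_scattering_data_kills_attenuated_transform_general n τ hτ A B hA hB U V u hUdiff hVdiff
    hudiff hUode hUterm hVode hVterm huode huterm hscat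
end
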